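/- For every DAG D = (V,A) there exist a minimum-cardinality arc set A' ⊆ A such that D − A' is a funnel and a funnel labeling L of D − A' that assigns Fork to every source of D and Merge to every sink of D that is not also a source. -/

import Mathlib

variable {V : Type*} [Fintype V] [DecidableEq V]

/-- Arc adjacency of a digraph given by its finite arc set. -/
def ArcAdj (A : Finset (V × V)) : V → V → Prop := fun u v => (u, v) ∈ A

/-- A digraph is a DAG if it contains no directed cycle. -/
def IsDAG (A : Finset (V × V)) : Prop := ∀ v : V, ¬ Relation.TransGen (ArcAdj A) v v

/-- Indegree of a vertex. -/
def inDeg (A : Finset (V × V)) (v : V) : ℕ := (A.filter fun e => e.2 = v).card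

/-- Outdegree of a vertex. -/
def outDeg (A : Finset (V × V)) (v : V) : ℕ := (A.filter fun e => e.1 = v).card

/-- A source is a vertex of indegree 0. -/
def IsSource (A : Finset (V × V)) (v : V) : Prop := inDeg A v = 0

/-- A sink is a vertex of outdegree 0. -/
def IsSink (A : Finset (V × V)) (v : V) : Prop := outDeg A v = 0

/-- The arcs (consecutive pairs of vertices) of a path given as a list of vertices. -/
def arcsOf (p : List V) : List (V × V) := p.zip p.tail

/-- A source-sink path: a directed path (with at least one arc) starting at a
source and ending at a sink. -/
def IsSourceSinkPath (A : Finset (V × V)) (p : List V) : Prop :=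
  2 ≤ p.length ∧ List.Chain' (ArcAdj A) p ∧ p.Nodup ∧
  (∃ s, p.head? = some s ∧ IsSource A s) ∧
  (∃ t, p.getLast? = some t ∧ IsSink A t)

/-- An arc is private if exactly one source-sink path contains it. -/
def IsPrivate (A : Finset (V × V)) (e : V × V) : Prop :=
  ∃! p : List V, IsSourceSinkPath A p ∧ e ∈ arcsOf p

/-- A funnel: every source-sink path contains at least one private arc. -/
def IsFunnel (A : Finset (V × V)) : Prop :=
  ∀ p : List V, IsSourceSinkPath A p → ∃ e ∈ arcsOf p, IsPrivate A e

/-- The arc-deletion distance to a funnel: the minimum number of arcs whose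
deletion turns the digraph into a funnel. -/
noncomputable def funnelDist (A : Finset (V × V)) : ℕ :=
  sInf {k | ∃ B ⊆ A, B.card = k ∧ IsFunnel (A \ B)}

/-- Vertex labels for funnel labelings. -/
inductive Label : Type where
  | fork
  | merge
deriving DecidableEq

/-- A funnel labeling: Fork vertices have indegree at most 1, Merge vertices have
outdegree at most 1, and no arc goes from a Merge vertex to a Fork vertex. -/
def FunnelLabeling (A : Finset (V × V)) (L : V → Label) : Prop :=
  (∀ v, L v = Label.fork → inDeg A v ≤ 1) ∧
  (∀ v, L v = Label.merge → outDeg A v ≤ 1) ∧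
  ∀ v u, (v, u) ∈ A → ¬(L v = Label.merge ∧ L u = Label.fork)

/-!
Take a minimum deletion set `B` and label the funnel `F = A \ B` Merge exactly at the
vertices reachable in `F` from a vertex of indegree at least 2 and at the sinks of `A` that are
not sources. The one real point is that in a funnel such a reachable vertex `v` has outdegree at
most 1: given arcs `a → w ← b` and `c ← v → d` with `w ⇝ v`, extend them to source-sink paths
through `a, w, v, c`, through `b, w, v, c` and through `a, w, v, d`. Every arc of the first lies
on one of the other two, so the first path has no private arc.
-/

open List Relation

theorem mem_arcsOf_iff_infix {α : Type*} {l : List α} {x y : α} :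
    (x, y) ∈ arcsOf l ↔ [x, y] <:+: l := by
  induction l with
  | nil => simp [arcsOf]
  | cons a l ih =>
    cases l with
    | nil => simpa [arcsOf] using fun h => by simpa using h.length_le
    | cons b l =>
      rw [show arcsOf (a :: b :: l) = (a, b) :: arcsOf (b :: l) from rfl, mem_cons, ih,
        infix_cons_iff (l₂ := b :: l)]
      simp [cons_prefix_cons]

theorem arcsOf_subset_of_infix {α : Type*} {l₁ l₂ : List α} (h : l₁ <:+: l₂) :
    arcsOf l₁ ⊆ arcsOf l₂ := fun _ he =>
  mem_arcsOf_iff_infix.2 ((mem_arcsOf_iff_infix.1 he).trans h)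

theorem mem_arcsOf_append_append {α : Type*} {X Y Z : List α} {e : α × α} (hY : Y ≠ [])
    (he : e ∈ arcsOf (X ++ Y ++ Z)) : e ∈ arcsOf (X ++ Y) ∨ e ∈ arcsOf (Y ++ Z) := by
  obtain ⟨x, y⟩ := e
  simp only [mem_arcsOf_iff_infix] at he ⊢
  rw [append_assoc, infix_append_iff] at he
  rcases he with h | h | ⟨l₁, l₂, hl, h₁, h₂⟩
  · exact .inl (h.trans (infix_append [] X Y))
  · exact .inr h
  · obtain _ | ⟨a, _ | ⟨b, _ | ⟨c, l₁⟩⟩⟩ := l₁ <;>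
      simp only [nil_append, cons_append, cons.injEq, reduceCtorEq, and_false] at hl
    · exact .inr (hl ▸ h₂.isInfix)
    · obtain ⟨rfl, rfl⟩ := hl
      obtain ⟨c, Y, rfl⟩ := exists_cons_of_ne_nil hY
      have : [y] <+: c :: Y := by simp_all [cons_prefix_cons]
      exact .inl (infix_append_iff.2 (.inr (.inr ⟨[x], [y], rfl, h₁, this⟩)))
    · obtain ⟨rfl, rfl, rfl⟩ := hl
      exact .inl (h₁.isInfix.trans (infix_append [] X Y))

section Walks

omit [Fintype V] [DecidableEq V]

variable {A F : Finset (V × V)} {x y z u : V}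

structure IsWalk (A : Finset (V × V)) (x y : V) (l : List V) : Prop where
  ne_nil : l ≠ []
  isChain : IsChain (ArcAdj A) l
  head_eq : l.head ne_nil = x
  getLast_eq : l.getLast ne_nil = y

theorem Relation.ReflTransGen.exists_isWalk (h : ReflTransGen (ArcAdj A) x y) :
    ∃ l, IsWalk A x y l := by
  obtain ⟨l, hl, hc, hx, hy⟩ := exists_isChain_ne_nil_of_relationReflTransGen h
  exact ⟨l, hl, hc, hx, hy⟩

theorem IsWalk.append {l₁ l₂ : List V} (h₁ : IsWalk A x y l₁) (hyz : (y, z) ∈ A)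
    (h₂ : IsWalk A z u l₂) : IsWalk A x u (l₁ ++ l₂) where
  ne_nil := by simp [h₁.ne_nil]
  isChain := h₁.isChain.append h₂.isChain fun a ha b hb => by
    rw [getLast?_eq_some_getLast h₁.ne_nil, h₁.getLast_eq, Option.mem_some_iff] at ha
    rw [head?_eq_some_head h₂.ne_nil, h₂.head_eq, Option.mem_some_iff] at hb
    exact ha ▸ hb ▸ hyz
  head_eq := by rw [head_append_of_ne_nil h₁.ne_nil, h₁.head_eq]
  getLast_eq := by rw [getLast_append_of_ne_nil _ h₂.ne_nil, h₂.getLast_eq]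

theorem IsDAG.nodup_of_isChain (hA : IsDAG A) {l : List V} (h : IsChain (ArcAdj A) l) :
    l.Nodup :=
  have : Std.Irrefl (TransGen (ArcAdj A)) := ⟨hA⟩
  (isChain_iff_pairwise.1 (h.imp fun _ _ => TransGen.single)).nodup

theorem IsDAG.mono (hA : IsDAG A) (hFA : F ⊆ A) : IsDAG F :=
  fun v hv => hA v (TransGen.mono (fun _ _ h => hFA h) v v hv)

end Walks

section Paths

omit [Fintype V]

variable {A F : Finset (V × V)} {s t v : V}

theorem IsWalk.isSourceSinkPath (hA : IsDAG A) {l : List V} (h : IsWalk A s t l)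
    (hl : 2 ≤ l.length) (hs : IsSource A s) (ht : IsSink A t) : IsSourceSinkPath A l :=
  ⟨hl, h.isChain, hA.nodup_of_isChain h.isChain,
    ⟨s, by rw [head?_eq_some_head h.ne_nil, h.head_eq], hs⟩,
    ⟨t, by rw [getLast?_eq_some_getLast h.ne_nil, h.getLast_eq], ht⟩⟩

theorem isFunnel_empty : IsFunnel (∅ : Finset (V × V)) := by
  rintro (_ | ⟨x, _ | ⟨y, l⟩⟩) ⟨hl, hc, -⟩
  · simp at hl
  · simp at hl
  · exact absurd (isChain_cons_cons.1 hc).1 (Finset.notMem_empty _)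

theorem inDeg_mono (hFA : F ⊆ A) (v : V) : inDeg F v ≤ inDeg A v :=
  Finset.card_le_card (Finset.filter_subset_filter _ hFA)

theorem outDeg_mono (hFA : F ⊆ A) (v : V) : outDeg F v ≤ outDeg A v :=
  Finset.card_le_card (Finset.filter_subset_filter _ hFA)

theorem isSource_iff : IsSource A v ↔ ∀ u, (u, v) ∉ A := by
  simp only [IsSource, inDeg, Finset.card_eq_zero, Finset.filter_eq_empty_iff]
  exact ⟨fun h u hu => h hu rfl, fun h e he hev => h e.1 (hev ▸ he)⟩

theorem isSink_iff : IsSink A v ↔ ∀ u, (v, u) ∉ A := by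
  simp only [IsSink, outDeg, Finset.card_eq_zero, Finset.filter_eq_empty_iff]
  exact ⟨fun h u hu => h hu rfl, fun h e he hev => h e.2 (hev ▸ he)⟩

theorem one_lt_inDeg_iff : 1 < inDeg A v ↔ ∃ a b, a ≠ b ∧ (a, v) ∈ A ∧ (b, v) ∈ A := by
  rw [inDeg, Finset.one_lt_card_iff]
  constructor
  · rintro ⟨⟨a, _⟩, ⟨b, _⟩, ha, hb, hab⟩
    simp only [Finset.mem_filter] at ha hb
    obtain ⟨ha, rfl⟩ := ha
    obtain ⟨hb, rfl⟩ := hb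
    exact ⟨a, b, fun h => hab (h ▸ rfl), ha, hb⟩
  · rintro ⟨a, b, hab, ha, hb⟩
    exact ⟨(a, v), (b, v), by simp [ha], by simp [hb], by simpa using hab⟩

theorem one_lt_outDeg_iff : 1 < outDeg A v ↔ ∃ c d, c ≠ d ∧ (v, c) ∈ A ∧ (v, d) ∈ A := by
  rw [outDeg, Finset.one_lt_card_iff]
  constructor
  · rintro ⟨⟨_, c⟩, ⟨_, d⟩, hc, hd, hcd⟩
    simp only [Finset.mem_filter] at hc hd
    obtain ⟨hc, rfl⟩ := hc
    obtain ⟨hd, rfl⟩ := hd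
    exact ⟨c, d, fun h => hcd (h ▸ rfl), hc, hd⟩
  · rintro ⟨c, d, hcd, hc, hd⟩
    exact ⟨(v, c), (v, d), by simp [hc], by simp [hd], by simpa using hcd⟩

theorem not_isPrivate_of_reroute {X X' Y Z Z' : List V} (hY : Y ≠ [])
    (hP : IsSourceSinkPath A (X ++ Y ++ Z)) (hP₁ : IsSourceSinkPath A (X' ++ Y ++ Z))
    (hP₂ : IsSourceSinkPath A (X ++ Y ++ Z')) (hX : X ≠ X') (hZ : Z ≠ Z') {e : V × V}
    (he : e ∈ arcsOf (X ++ Y ++ Z)) : ¬ IsPrivate A e := by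
  intro hpriv
  rcases mem_arcsOf_append_append hY he with h | h
  · have h₂ : e ∈ arcsOf (X ++ Y ++ Z') := arcsOf_subset_of_infix (infix_append [] _ _) h
    exact hZ (append_cancel_left (hpriv.unique ⟨hP, he⟩ ⟨hP₂, h₂⟩))
  · have h₁ : e ∈ arcsOf (X' ++ Y ++ Z) := by
      rw [append_assoc]; exact arcsOf_subset_of_infix (suffix_append _ _).isInfix h
    have hPP₁ := hpriv.unique ⟨hP, he⟩ ⟨hP₁, h₁⟩
    simp only [append_assoc] at hPP₁
    exact hX (append_cancel_right hPP₁)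

end Paths

section Finite

variable {A F : Finset (V × V)} {v w : V}

theorem IsDAG.exists_isSource_isWalk (hA : IsDAG A) (v : V) :
    ∃ s l, IsSource A s ∧ IsWalk A s v l := by
  have : Std.Irrefl (TransGen (ArcAdj A)) := ⟨hA⟩
  have hwf : WellFounded (ArcAdj A) :=
    (Finite.wellFounded_of_trans_of_irrefl _).mono fun _ _ => TransGen.single
  obtain ⟨s, hsv, hmin⟩ := hwf.has_min {s | ReflTransGen (ArcAdj A) s v} ⟨v, .refl⟩
  obtain ⟨l, hl⟩ := hsv.exists_isWalk
  exact ⟨s, l, isSource_iff.2 fun u hu => hmin u (.head hu hsv) hu, hl⟩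

theorem IsDAG.exists_isSink_isWalk (hA : IsDAG A) (v : V) :
    ∃ t l, IsSink A t ∧ IsWalk A v t l := by
  have : Std.Irrefl (TransGen (Function.swap (ArcAdj A))) :=
    ⟨fun v hv => hA v (transGen_swap.1 hv)⟩
  have hwf : WellFounded (Function.swap (ArcAdj A)) :=
    (Finite.wellFounded_of_trans_of_irrefl _).mono fun _ _ => TransGen.single
  obtain ⟨t, hvt, hmax⟩ := hwf.has_min {t | ReflTransGen (ArcAdj A) v t} ⟨v, .refl⟩
  obtain ⟨l, hl⟩ := hvt.exists_isWalk
  exact ⟨t, l, isSink_iff.2 fun u hu => hmax u (.tail hvt hu) hu, hl⟩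

theorem IsFunnel.outDeg_le_one_of_reflTransGen (hA : IsDAG A) (hF : IsFunnel A)
    (hw : 2 ≤ inDeg A w) (hwv : ReflTransGen (ArcAdj A) w v) : outDeg A v ≤ 1 := by
  by_contra! hv
  obtain ⟨a, b, hab, ha, hb⟩ := one_lt_inDeg_iff.1 hw
  obtain ⟨c, d, hcd, hc, hd⟩ := one_lt_outDeg_iff.1 hv
  obtain ⟨Y, hY⟩ := hwv.exists_isWalk
  obtain ⟨s, X, hs, hX⟩ := hA.exists_isSource_isWalk a
  obtain ⟨s', X', hs', hX'⟩ := hA.exists_isSource_isWalk b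
  obtain ⟨t, Z, ht, hZ⟩ := hA.exists_isSink_isWalk c
  obtain ⟨t', Z', ht', hZ'⟩ := hA.exists_isSink_isWalk d
  have path : ∀ {s a c t : V} {X Z : List V}, IsSource A s → IsWalk A s a X → (a, w) ∈ A →
      (v, c) ∈ A → IsWalk A c t Z → IsSink A t → IsSourceSinkPath A (X ++ Y ++ Z) := by
    intro s a c t X Z hs hX ha hc hZ ht
    have := hX.ne_nil
    have := hZ.ne_nil
    exact ((hX.append ha hY).append hc hZ).isSourceSinkPath hA (by grind [length_pos_iff]) hs ht
  have hXX' : X ≠ X' := fun h => hab (hX.getLast_eq.symm.trans (by simp_rw [h, hX'.getLast_eq]))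
  have hZZ' : Z ≠ Z' := fun h => hcd (hZ.head_eq.symm.trans (by simp_rw [h, hZ'.head_eq]))
  obtain ⟨e, he, hpriv⟩ := hF _ (path hs hX ha hc hZ ht)
  exact not_isPrivate_of_reroute hY.ne_nil (path hs hX ha hc hZ ht) (path hs' hX' hb hc hZ ht)
    (path hs hX ha hd hZ' ht') hXX' hZZ' he hpriv

theorem IsFunnel.exists_funnelLabeling (hA : IsDAG A) (hFA : F ⊆ A) (hF : IsFunnel F) :
    ∃ L : V → Label, FunnelLabeling F L ∧ (∀ v, IsSource A v → L v = .fork) ∧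
      (∀ v, IsSink A v → ¬ IsSource A v → L v = .merge) := by
  classical
  let IsMerge : V → Prop := fun u =>
    (∃ x, 2 ≤ inDeg F x ∧ ReflTransGen (ArcAdj F) x u) ∨ (IsSink A u ∧ ¬ IsSource A u)
  have inDeg_le_one : ∀ u, ¬ IsMerge u → inDeg F u ≤ 1 := fun u hu => by
    by_contra! h
    exact hu (.inl ⟨u, h, .refl⟩)
  have outDeg_le_one : ∀ u, IsMerge u → outDeg F u ≤ 1 := by
    rintro u (⟨x, hx, hxu⟩ | ⟨hu, -⟩)
    · exact hF.outDeg_le_one_of_reflTransGen (hA.mono hFA) hx hxu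
    · exact (outDeg_mono hFA u).trans (by rw [hu]; exact zero_le_one)
  have isMerge_of_mem : ∀ u v, (u, v) ∈ F → IsMerge u → IsMerge v := by
    rintro u v huv (⟨x, hx, hxu⟩ | ⟨hu, -⟩)
    · exact .inl ⟨x, hx, hxu.tail huv⟩
    · exact absurd (hFA huv) (isSink_iff.1 hu v)
  have not_isMerge_of_isSource : ∀ u, IsSource A u → ¬ IsMerge u := by
    rintro u hu (⟨x, hx, hxu⟩ | ⟨-, hu'⟩)
    · rcases hxu.cases_tail with rfl | ⟨y, -, hyu⟩
      · have := inDeg_mono hFA u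
        rw [IsSource] at hu
        omega
      · exact isSource_iff.1 hu y (hFA hyu)
    · exact hu' hu
  refine ⟨fun u => if IsMerge u then .merge else .fork,
    ⟨fun u hu => inDeg_le_one u ?_, fun u hu => outDeg_le_one u ?_, fun u v huv h => ?_⟩,
    fun u hu => if_neg (not_isMerge_of_isSource u hu), fun u hu hu' => if_pos (.inr ⟨hu, hu'⟩)⟩
  · by_contra h
    simp [h] at hu
  · by_contra h
    simp [h] at hu
  · by_cases hu : IsMerge u
    · simp [isMerge_of_mem u v huv hu] at h
    · simp [hu] at h

end Finite

/-- Every DAG `D` admits a minimum-cardinality arc set `A'` such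
that `D - A'` is a funnel, together with a funnel labeling of `D - A'` that
labels every source of `D` Fork and every sink of `D` that is not a source
Merge. -/
theorem exists_min_solution_with_normalized_labeling (A : Finset (V × V))
    (hdag : IsDAG A) :
    ∃ A' ⊆ A, IsFunnel (A \ A') ∧
      (∀ B ⊆ A, IsFunnel (A \ B) → A'.card ≤ B.card) ∧
      ∃ L : V → Label, FunnelLabeling (A \ A') L ∧
        (∀ v, IsSource A v → L v = Label.fork) ∧
        (∀ v, IsSink A v → ¬ IsSource A v → L v = Label.merge) := by
  classical
  obtain ⟨B, hB, hmin⟩ := (A.powerset.filter fun B => IsFunnel (A \ B)).exists_min_image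
    Finset.card ⟨A, by simpa using isFunnel_empty⟩
  simp only [Finset.mem_filter, Finset.mem_powerset] at hB hmin
  obtain ⟨L, hL⟩ := hB.2.exists_funnelLabeling hdag Finset.sdiff_subset
  exact ⟨B, hB.1, hB.2, fun B' hB'A hB' => hmin B' ⟨hB'A, hB'⟩, L, hL⟩
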